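/- Let 2 ≤ δ ≤ 8 and let D be a class in the del Pezzo lattice of rank 1+δ such that D·L ≥ 0 for every (−1)-class L. Then there exist pairwise orthogonal (−1)-classes F₁, …, F_{δ−1}, nonnegative integers n₁, …, n_{δ−1}, and a class D′ with D′·F_m = 0 for every m, such that D = Σ_{m=1}^{δ−1} n_m·(−K + F₁ + ⋯ + F_{m−1}) + D′ (the m = 1 summand being n₁·(−K)), and such that D′·x ≥ 0 for every class x orthogonal to all of F₁, …, F_{δ−1} which is either a (−1)-class or a conic class. (Lattice form of the decomposition of a nef divisor on a del Pezzo surface as a nonnegative combination of pulled-back anticanonical classes plus a nef divisor pulled back from a degree-8 del Pezzo surface.) -/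
import Mathlib


/-- A class in the del Pezzo lattice of rank `1 + δ`: the pair `(a, b)`
represents `a·ℓ − b₁e₁ − ⋯ − b_δ e_δ`. -/
abbrev Cls (δ : ℕ) : Type := ℤ × (Fin δ → ℤ)

/-- The intersection product: `(a;b)·(a';b') = a a' − Σ bᵢ bᵢ'`. -/
def ip {δ : ℕ} (x y : Cls δ) : ℤ := x.1 * y.1 - ∑ i, x.2 i * y.2 i

/-- The canonical class `K = −3ℓ + e₁ + ⋯ + e_δ`, i.e. `(−3; −1, …, −1)`. -/
def Kcls (δ : ℕ) : Cls δ := (-3, fun _ => -1)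

/-- A conic class: `Q·Q = 0` and `K·Q = −2`. -/
def IsConic {δ : ℕ} (Q : Cls δ) : Prop := ip Q Q = 0 ∧ ip (Kcls δ) Q = -2

/-- A `(−1)`-class: `L·L = −1` and `K·L = −1`. -/
def IsMinusOne {δ : ℕ} (L : Cls δ) : Prop := ip L L = -1 ∧ ip (Kcls δ) L = -1

/-- Membership in the Weyl group `W_δ`: a ℤ-linear automorphism of the lattice
preserving the intersection form and fixing the canonical class. -/
def IsWeyl {δ : ℕ} (g : Cls δ ≃ₗ[ℤ] Cls δ) : Prop :=
  (∀ x y : Cls δ, ip (g x) (g y) = ip x y) ∧ g (Kcls δ) = Kcls δ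

section Aux

variable {δ : ℕ}

lemma ip_comm (x y : Cls δ) : ip x y = ip y x := by
  simp [ip, mul_comm]

lemma ip_add_left (x y z : Cls δ) : ip (x + y) z = ip x z + ip y z := by
  simp [ip, add_mul, Finset.sum_add_distrib]; ring

lemma ip_zero_left (z : Cls δ) : ip 0 z = 0 := by simp [ip]

lemma ip_neg_left (x z : Cls δ) : ip (-x) z = - ip x z := by
  simp [ip]; ring

lemma ip_sub_left (x y z : Cls δ) : ip (x - y) z = ip x z - ip y z := by
  simp [ip, sub_mul, Finset.sum_sub_distrib]; ring

lemma ip_sub_right (x y z : Cls δ) : ip x (y - z) = ip x y - ip x z := by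
  rw [ip_comm, ip_sub_left, ip_comm y x, ip_comm z x]

lemma ip_smul_left (c : ℤ) (x z : Cls δ) : ip (c • x) z = c * ip x z := by
  simp [ip, smul_eq_mul, mul_assoc, mul_sub, ← Finset.mul_sum]

lemma ip_sum_left {ι : Type*} (s : Finset ι) (f : ι → Cls δ) (z : Cls δ) :
    ip (∑ i ∈ s, f i) z = ∑ i ∈ s, ip (f i) z := by
  classical
  induction s using Finset.cons_induction with
  | empty => simp [ip_zero_left]
  | cons a s ha ih => rw [Finset.sum_cons, Finset.sum_cons, ip_add_left, ih]

/-- The coordinate `(−1)`-class `eᵢ`. -/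
def ecls (i : Fin δ) : Cls δ := (0, fun j => if j = i then -1 else 0)

lemma ecls_minusOne (i : Fin δ) : IsMinusOne (ecls i) := by
  constructor <;>
  · simp [IsMinusOne, ip, ecls, Kcls, ite_mul, mul_ite, Finset.sum_ite_eq']

lemma ecls_orth {i j : Fin δ} (h : i ≠ j) : ip (ecls i) (ecls j) = 0 := by
  simp [ip, ecls, ite_mul, mul_ite]
  intro hij
  exact h hij.symm

end Aux

/-- Lattice form of the decomposition of a nef class: a class pairing
nonnegatively with all (−1)-classes decomposes as a nonnegative combination of
pulled-back anticanonical classes −K + F₁ + ⋯ + F_{m−1} (for pairwise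
orthogonal (−1)-classes F₁, …, F_{δ−1}) plus a class D′ orthogonal to all the
Fₘ which pairs nonnegatively with every (−1)-class and conic class orthogonal
to all the Fₘ. -/
theorem stmt14 (δ : ℕ) (h1 : 2 ≤ δ) (h2 : δ ≤ 8) (D : Cls δ)
    (hD : ∀ L : Cls δ, IsMinusOne L → 0 ≤ ip D L) :
    ∃ (F : Fin (δ - 1) → Cls δ) (n : Fin (δ - 1) → ℕ) (D' : Cls δ),
      (∀ m, IsMinusOne (F m)) ∧
      (∀ m m', m ≠ m' → ip (F m) (F m') = 0) ∧
      (∀ m, ip D' (F m) = 0) ∧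
      D = (∑ m : Fin (δ - 1), (n m : ℤ) •
            (-(Kcls δ) + ∑ j ∈ Finset.univ.filter (fun j : Fin (δ - 1) => j < m), F j))
          + D' ∧
      (∀ x : Cls δ, (∀ m, ip x (F m) = 0) → (IsMinusOne x ∨ IsConic x) →
        0 ≤ ip D' x) := by
  classical
  have hN : 0 < δ - 1 := by omega
  have hle : δ - 1 ≤ δ := Nat.sub_le δ 1
  -- The set of "good" tuples: pairwise orthogonal (−1)-classes with monotone D-values.
  set P : ℤ → Prop := fun s => ∃ F : Fin (δ - 1) → Cls δ,
    (∀ m, IsMinusOne (F m)) ∧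
    (∀ m m', m ≠ m' → ip (F m) (F m') = 0) ∧
    (Monotone fun m => ip D (F m)) ∧
    (∑ m, ip D (F m)) = s with hP
  -- P is inhabited: sort the coordinate classes.
  have hinh : ∃ s, P s := by
    set vals : Fin (δ - 1) → ℤ := fun m => ip D (ecls (Fin.castLE hle m)) with hvals
    set σ := Tuple.sort vals with hσ
    refine ⟨_, fun m => ecls (Fin.castLE hle (σ m)), fun m => ecls_minusOne _,
      fun m m' hmm => ecls_orth ?_, Tuple.monotone_sort vals, rfl⟩
    exact fun h => hmm (σ.injective (Fin.castLE_injective hle h))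
  -- P is bounded below by 0.
  have hbdd : ∃ b : ℤ, ∀ s, P s → b ≤ s := by
    refine ⟨0, fun s hs => ?_⟩
    obtain ⟨F, hF1, -, -, hFs⟩ := hs
    rw [← hFs]
    exact Finset.sum_nonneg fun m _ => hD _ (hF1 m)
  obtain ⟨lb, ⟨F, hF1, hF2, hF3, hF4⟩, hmin0⟩ := Int.exists_least_of_bdd hbdd hinh
  set v : Fin (δ - 1) → ℤ := fun m => ip D (F m) with hv
  have hv0 : ∀ m, 0 ≤ v m := fun m => hD _ (hF1 m)
  set last : Fin (δ - 1) := ⟨δ - 2, by omega⟩ with hlast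
  have hle_last : ∀ m : Fin (δ - 1), m ≤ last := by
    intro m
    have hm := m.2
    have hv' : last.val = δ - 2 := rfl
    rw [Fin.le_def, hv']
    omega
  -- Key minimality property.
  have hmin : ∀ x : Cls δ, IsMinusOne x → (∀ m, m ≠ last → ip x (F m) = 0) →
      v last ≤ ip D x := by
    intro x hx hxF
    by_contra hcon
    push_neg at hcon
    set G : Fin (δ - 1) → Cls δ := Function.update F last x with hG
    have hG1 : ∀ m, IsMinusOne (G m) := by
      intro m
      rw [hG, Function.update_apply]
      by_cases h : m = last
      · rw [if_pos h]; exact hx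
      · rw [if_neg h]; exact hF1 m
    have hG2 : ∀ m m', m ≠ m' → ip (G m) (G m') = 0 := by
      intro m m' hmm
      rw [hG]
      rw [Function.update_apply, Function.update_apply]
      by_cases h : m = last
      · have h' : ¬ m' = last := fun hh => hmm (h.trans hh.symm)
        rw [if_pos h, if_neg h']
        exact hxF m' h'
      · by_cases h' : m' = last
        · rw [if_neg h, if_pos h']
          rw [ip_comm]
          exact hxF m h
        · rw [if_neg h, if_neg h']
          exact hF2 m m' hmm
    set vals' : Fin (δ - 1) → ℤ := fun m => ip D (G m) with hvals'
    set σ := Tuple.sort vals' with hσ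
    have hPnew : P (∑ m, ip D (G (σ m))) := by
      refine ⟨fun m => G (σ m), fun m => hG1 _,
        fun m m' hmm => hG2 _ _ (fun h => hmm (σ.injective h)),
        Tuple.monotone_sort vals', rfl⟩
    have hsum1 : (∑ m, ip D (G (σ m))) = ∑ m, ip D (G m) := by
      exact Equiv.sum_comp σ (fun m => ip D (G m))
    have hsum2 : (fun m => ip D (G m)) = Function.update v last (ip D x) := by
      funext m
      rw [hG, Function.update_apply, Function.update_apply]
      by_cases h : m = last
      · rw [if_pos h, if_pos h]
      · rw [if_neg h, if_neg h]
    have hsum3 : (∑ m, ip D (G m)) = ip D x + ∑ m ∈ Finset.univ \ {last}, v m := by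
      rw [hsum2]
      exact Finset.sum_update_of_mem (Finset.mem_univ last) v (ip D x)
    have hsum4 : lb = v last + ∑ m ∈ Finset.univ \ {last}, v m := by
      rw [← hF4]
      exact (Finset.sum_eq_add_sum_sdiff_singleton_of_mem (Finset.mem_univ last) v)
    have := hmin0 _ hPnew
    rw [hsum1, hsum3] at this
    omega
  -- The coefficient function n.
  set U : ℕ → ℤ := fun t => if h : t = 0 then 0 else
    if h' : t - 1 < δ - 1 then v ⟨t - 1, h'⟩ else v last with hU
  have hUm : ∀ m : Fin (δ - 1), U (m.val + 1) = v m := by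
    intro m
    have hm := m.2
    have h1 : m.val + 1 - 1 < δ - 1 := by omega
    simp only [hU]
    rw [dif_neg (Nat.succ_ne_zero _), dif_pos h1]
    exact congrArg v (Fin.eta m h1)
  set n : Fin (δ - 1) → ℕ := fun m => (U (m.val + 1) - U m.val).toNat with hn
  have hnval : ∀ m : Fin (δ - 1), (n m : ℤ) = U (m.val + 1) - U m.val := by
    intro m
    rw [hn]
    refine Int.toNat_of_nonneg ?_
    rw [hUm m]
    rcases Nat.eq_zero_or_pos m.val with h | h
    · have h0 : U m.val = 0 := by simp [hU, h]
      rw [h0]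
      simpa using hv0 m
    · have hm1 : m.val - 1 < δ - 1 := by have := m.2; omega
      have h0 : U m.val = v ⟨m.val - 1, hm1⟩ := by
        simp only [hU]
        rw [dif_neg (by omega), dif_pos hm1]
      rw [h0]
      have hle' : (⟨m.val - 1, hm1⟩ : Fin (δ - 1)) ≤ m := by
        rw [Fin.le_def]; exact Nat.sub_le _ _
      have := hF3 hle'
      simp only [sub_nonneg]
      exact this
  -- Telescoping sum.
  have htel : ∀ k : Fin (δ - 1),
      (∑ m ∈ Finset.univ.filter (fun m => m ≤ k), (n m : ℤ)) = v k := by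
    intro k
    rw [Finset.sum_filter]
    have step1 : (∑ m : Fin (δ - 1), if m ≤ k then (n m : ℤ) else 0)
        = ∑ m : Fin (δ - 1), (fun t : ℕ => if t ≤ k.val then U (t + 1) - U t else 0) m.val := by
      refine Finset.sum_congr rfl fun m _ => ?_
      show (if m ≤ k then (n m : ℤ) else 0)
          = if m.val ≤ k.val then U (m.val + 1) - U m.val else 0
      by_cases h : m ≤ k
      · rw [if_pos h, if_pos (Fin.le_def.mp h), hnval]
      · rw [if_neg h, if_neg (fun hh => h (Fin.le_def.mpr hh))]
    rw [step1, Fin.sum_univ_eq_sum_range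
      (fun t : ℕ => if t ≤ k.val then U (t + 1) - U t else 0) (δ - 1)]
    have hsub : Finset.range (k.val + 1) ⊆ Finset.range (δ - 1) := by
      refine Finset.range_subset_range.mpr ?_
      have := k.2; omega
    rw [← Finset.sum_subset hsub (fun t _ ht => by
      rw [if_neg]
      simp only [Finset.mem_range] at ht
      omega)]
    have : (∑ t ∈ Finset.range (k.val + 1), if t ≤ k.val then U (t + 1) - U t else 0)
        = ∑ t ∈ Finset.range (k.val + 1), (U (t + 1) - U t) := by
      refine Finset.sum_congr rfl fun t ht => ?_
      simp only [Finset.mem_range] at ht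
      rw [if_pos (by omega)]
    rw [this, Finset.sum_range_sub U, hUm k, hU]
    simp
  -- The pieces A m and the remainder D'.
  set A : Fin (δ - 1) → Cls δ := fun m =>
    -(Kcls δ) + ∑ j ∈ Finset.univ.filter (fun j : Fin (δ - 1) => j < m), F j with hA
  have hAF : ∀ m k, ip (A m) (F k) = if k < m then 0 else 1 := by
    intro m k
    have horthk : ∀ j, ip (F j) (F k) = if j = k then (-1 : ℤ) else 0 := by
      intro j
      by_cases h : j = k
      · rw [if_pos h, h]; exact (hF1 k).1
      · rw [if_neg h]; exact hF2 j k h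
    rw [hA]
    rw [ip_add_left, ip_neg_left, (hF1 k).2, ip_sum_left]
    rw [Finset.sum_congr rfl (fun j _ => horthk j), Finset.sum_ite_eq']
    by_cases h : k < m
    · rw [if_pos h, if_pos (by simp [h])]
      ring
    · rw [if_neg h, if_neg (by simp [h])]
      ring
  have hAx : ∀ (m : Fin (δ - 1)) (x : Cls δ), (∀ k, ip x (F k) = 0) →
      ip (A m) x = - ip (Kcls δ) x := by
    intro m x hx
    rw [hA]
    rw [ip_add_left, ip_neg_left, ip_sum_left]
    have : (∑ j ∈ Finset.univ.filter (fun j : Fin (δ - 1) => j < m), ip (F j) x) = 0 := by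
      refine Finset.sum_eq_zero fun j _ => ?_
      rw [ip_comm]; exact hx j
    rw [this]; ring
  set T : Cls δ := ∑ m, (n m : ℤ) • A m with hT
  have hipT : ∀ z : Cls δ, ip T z = ∑ m, (n m : ℤ) * ip (A m) z := by
    intro z
    rw [hT, ip_sum_left]
    exact Finset.sum_congr rfl fun m _ => ip_smul_left _ _ _
  have hsumn : (∑ m, (n m : ℤ)) = v last := by
    rw [← htel last]
    refine (Finset.sum_congr ?_ fun m _ => rfl).symm
    rw [Finset.filter_true_of_mem fun m _ => hle_last m]
  refine ⟨F, n, D - T, hF1, hF2, ?_, ?_, ?_⟩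
  · -- ip (D - T) (F k) = 0
    intro k
    rw [ip_sub_left, hipT]
    have : (∑ m, (n m : ℤ) * ip (A m) (F k))
        = ∑ m ∈ Finset.univ.filter (fun m => m ≤ k), (n m : ℤ) := by
      rw [Finset.sum_filter]
      refine Finset.sum_congr rfl fun m _ => ?_
      rw [hAF m k]
      by_cases h : m ≤ k
      · rw [if_pos h, if_neg (not_lt.mpr h), mul_one]
      · rw [if_neg h, if_pos (lt_of_not_ge h), mul_zero]
    rw [this, htel k]
    simp [hv]
  · -- the decomposition
    rw [hT]
    abel
  · -- nef on the complement
    intro x hx hxcls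
    have hDx : ip (D - T) x = ip D x + ip (Kcls δ) x * v last := by
      rw [ip_sub_left, hipT]
      have : (∑ m, (n m : ℤ) * ip (A m) x) = - ip (Kcls δ) x * v last := by
        calc (∑ m, (n m : ℤ) * ip (A m) x)
            = ∑ m, (n m : ℤ) * (- ip (Kcls δ) x) :=
              Finset.sum_congr rfl fun m _ => by rw [hAx m x hx]
          _ = (∑ m, (n m : ℤ)) * (- ip (Kcls δ) x) := by rw [← Finset.sum_mul]
          _ = - ip (Kcls δ) x * v last := by rw [hsumn]; ring
      rw [this]; ring
    rcases hxcls with hx1 | hx1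
    · rw [hDx, hx1.2]
      have := hmin x hx1 (fun m _ => hx m)
      omega
    · -- conic case: x - F last is a (−1)-class orthogonal to the first δ−2 classes
      set y : Cls δ := x - F last with hy
      have hy1 : IsMinusOne y := by
        constructor
        · rw [hy, ip_sub_left, ip_sub_right, ip_sub_right]
          have h1 := hx1.1
          have h2 := hx last
          have h3 : ip (F last) x = 0 := by rw [ip_comm]; exact h2
          have h4 := (hF1 last).1
          omega
        · rw [hy, ip_sub_right]
          have h1 := hx1.2
          have h2 := (hF1 last).2
          omega
      have hy2 : ∀ m, m ≠ last → ip y (F m) = 0 := by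
        intro m hm
        rw [hy, ip_sub_left]
        rw [hx m, hF2 last m (fun h => hm h.symm)]
        ring
      have := hmin y hy1 hy2
      rw [hy, ip_sub_right] at this
      rw [hDx, hx1.2]
      have hvlast : v last = ip D (F last) := rfl
      omega
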